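/- Let n ≥ 1, let p be an integer with 1 ≤ p ≤ n, let A and D be n×n real matrices, and define L(i,j) := ⊕_p(l ↦ A(i,l) + D(l,j)) and U(i,j) := ⊕_p(l ↦ A(i,l) − D(j,l)). Assume that every vector z ∈ ℝⁿ satisfying (A ⊗_p z)_i = λ + z_i for all i (for some λ ∈ ℝ) lies in Zone(D), and that for each row i there exists j with A(i,j) = L(i,j) = U(i,j). Then for any x, y ∈ ℝⁿ and λ ∈ ℝ with (A ⊗_p x) = λ + x and (A ⊗_p y) = λ + y (componentwise), and any α, β ∈ ℝ, the vectors w and v defined by w_i = max(α + x_i, β + y_i) and v_i = min(α + x_i, β + y_i) satisfy (A ⊗_p w) = λ + w and (A ⊗_p v) = λ + v. -/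

import Mathlib

/-!
If `z` lies in the zone of `D` and `j` is an active column of row `i`, the zone inequalities
`z l ≤ z j - D j l` and `z l ≥ z j + D l j` sandwich `(A ⊗_p z)_i` between `U(i,j) + z j` and
`L(i,j) + z j`, both equal to `A i j + z j`. So on the zone every row of `A ⊗_p ·` is a single
max-plus term, which commutes with pointwise `max` and `min`. The zone is closed under pointwise
`max` and `min`, and it contains all eigenvectors, translates of eigenvectors included.
-/

/-- The maxmin-`p` value of `s : Fin n → ℝ`: the `p`-th smallest element (1-indexed) of the
multiset `{s 0, …, s (n-1)}`, counted with multiplicity. -/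
noncomputable def maxmin {n : ℕ} (p : ℕ) (s : Fin n → ℝ) : ℝ :=
  (Multiset.sort (Multiset.map s (Finset.univ : Finset (Fin n)).val) (· ≤ ·)).getD (p - 1) 0

/-- The maxmin-`p` matrix-vector product: `(A ⊗_p x)_i = ⊕_p (j ↦ A i j + x j)`. -/
noncomputable def mmProd {n : ℕ} (p : ℕ) (A : Fin n → Fin n → ℝ) (x : Fin n → ℝ) :
    Fin n → ℝ :=
  fun i => maxmin p (fun j => A i j + x j)

open Finset

theorem List.Pairwise.getElem_le_iff_lt_countP {α : Type*} [LinearOrder α] {l : List α}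
    (hl : l.Pairwise (· ≤ ·)) {k : ℕ} (hk : k < l.length) (v : α) :
    l[k] ≤ v ↔ k < l.countP (· ≤ v) := by
  induction l generalizing k with
  | nil => simp at hk
  | cons a l ih =>
    rw [List.pairwise_cons] at hl
    by_cases hav : a ≤ v
    · cases k with
      | zero => simp [hav]
      | succ k => simp [hav, ih hl.2 (Nat.lt_of_succ_lt_succ hk)]
    · have hlt : ∀ b ∈ a :: l, v < b := by
        simp only [List.mem_cons, forall_eq_or_imp]
        exact ⟨lt_of_not_ge hav, fun b hb => (lt_of_not_ge hav).trans_le (hl.1 b hb)⟩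
      have hcount : (a :: l).countP (· ≤ v) = 0 :=
        List.countP_eq_zero.2 fun b hb => by simpa using hlt b hb
      rw [hcount]
      simpa using hlt _ (List.getElem_mem hk)

theorem maxmin_le_iff {n p : ℕ} (hp1 : 1 ≤ p) (hpn : p ≤ n) (s : Fin n → ℝ) (v : ℝ) :
    maxmin p s ≤ v ↔ p ≤ #{j | s j ≤ v} := by
  set m := Multiset.map s (univ : Finset (Fin n)).val
  have hlen : (m.sort (· ≤ ·)).length = n := by simp [m]
  have hcount : (m.sort (· ≤ ·)).countP (· ≤ v) = #{j | s j ≤ v} := by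
    rw [← Multiset.coe_countP, Multiset.sort_eq, Multiset.countP_map]
    rfl
  change (m.sort (· ≤ ·)).getD (p - 1) 0 ≤ v ↔ _
  rw [List.getD_eq_getElem _ _ (by omega),
    (Multiset.pairwise_sort m _).getElem_le_iff_lt_countP, hcount]
  omega

theorem maxmin_mono {n p : ℕ} (hp1 : 1 ≤ p) (hpn : p ≤ n) {s t : Fin n → ℝ}
    (h : ∀ j, s j ≤ t j) : maxmin p s ≤ maxmin p t := by
  rw [maxmin_le_iff hp1 hpn]
  exact ((maxmin_le_iff hp1 hpn t _).1 le_rfl).trans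
    (card_le_card (monotone_filter_right _ fun j _ hj => (h j).trans hj))

theorem maxmin_add_const {n p : ℕ} (hp1 : 1 ≤ p) (hpn : p ≤ n) (s : Fin n → ℝ) (c : ℝ) :
    maxmin p (fun j => s j + c) = maxmin p s + c :=
  eq_of_forall_ge_iff fun v => by
    rw [maxmin_le_iff hp1 hpn, ← le_sub_iff_add_le, maxmin_le_iff hp1 hpn]
    simp only [← le_sub_iff_add_le]

theorem mmProd_const_add {n p : ℕ} (hp1 : 1 ≤ p) (hpn : p ≤ n) (A : Fin n → Fin n → ℝ)
    (x : Fin n → ℝ) (c : ℝ) (i : Fin n) :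
    mmProd p A (fun j => c + x j) i = c + mmProd p A x i := by
  simp only [mmProd, ← add_assoc, add_right_comm _ c, maxmin_add_const hp1 hpn]
  ring

def zone {n : ℕ} (D : Fin n → Fin n → ℝ) : Set (Fin n → ℝ) :=
  {z | ∀ i j, z i - z j ≥ D i j}

/-- In the paper's notation, `A i j = L(i,j) = U(i,j)`. -/
def IsActive {n : ℕ} (p : ℕ) (A D : Fin n → Fin n → ℝ) (i j : Fin n) : Prop :=
  A i j = maxmin p (fun l => A i l + D l j) ∧
    maxmin p (fun l => A i l + D l j) = maxmin p (fun l => A i l - D j l)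

section

variable {n p : ℕ} {A D : Fin n → Fin n → ℝ} {x y : Fin n → ℝ}

theorem max_mem_zone (hx : x ∈ zone D) (hy : y ∈ zone D) :
    (fun j => max (x j) (y j)) ∈ zone D := fun i j => by
  have := hx i j
  have := hy i j
  rw [ge_iff_le, le_sub_iff_add_le, add_max]
  exact max_le_max (by linarith) (by linarith)

theorem min_mem_zone (hx : x ∈ zone D) (hy : y ∈ zone D) :
    (fun j => min (x j) (y j)) ∈ zone D := fun i j => by
  have := hx i j
  have := hy i j
  rw [ge_iff_le, le_sub_iff_add_le, add_min]
  exact min_le_min (by linarith) (by linarith)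

theorem mmProd_eq_of_mem_zone (hp1 : 1 ≤ p) (hpn : p ≤ n) {z : Fin n → ℝ}
    (hz : z ∈ zone D) {i j : Fin n} (hij : IsActive p A D i j) :
    mmProd p A z i = A i j + z j := by
  obtain ⟨hL, hU⟩ := hij
  apply le_antisymm
  · calc mmProd p A z i ≤ maxmin p (fun l => (A i l - D j l) + z j) :=
          maxmin_mono hp1 hpn fun l => by linarith [hz j l]
      _ = A i j + z j := by rw [maxmin_add_const hp1 hpn, ← hU, ← hL]
  · calc A i j + z j = maxmin p (fun l => (A i l + D l j) + z j) := by
          rw [maxmin_add_const hp1 hpn, ← hL]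
      _ ≤ mmProd p A z i := maxmin_mono hp1 hpn fun l => by linarith [hz l j]

theorem mmProd_max_of_mem_zone (hp1 : 1 ≤ p) (hpn : p ≤ n) (hx : x ∈ zone D)
    (hy : y ∈ zone D) {i j : Fin n} (hij : IsActive p A D i j) :
    mmProd p A (fun l => max (x l) (y l)) i = max (mmProd p A x i) (mmProd p A y i) := by
  rw [mmProd_eq_of_mem_zone hp1 hpn (max_mem_zone hx hy) hij,
    mmProd_eq_of_mem_zone hp1 hpn hx hij, mmProd_eq_of_mem_zone hp1 hpn hy hij, max_add_add_left]

theorem mmProd_min_of_mem_zone (hp1 : 1 ≤ p) (hpn : p ≤ n) (hx : x ∈ zone D)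
    (hy : y ∈ zone D) {i j : Fin n} (hij : IsActive p A D i j) :
    mmProd p A (fun l => min (x l) (y l)) i = min (mmProd p A x i) (mmProd p A y i) := by
  rw [mmProd_eq_of_mem_zone hp1 hpn (min_mem_zone hx hy) hij,
    mmProd_eq_of_mem_zone hp1 hpn hx hij, mmProd_eq_of_mem_zone hp1 hpn hy hij, min_add_add_left]

end

theorem eigen_combinations_general (n p : ℕ) (hp1 : 1 ≤ p) (hpn : p ≤ n)
    (A D : Fin n → Fin n → ℝ)
    (hzone : ∀ z : Fin n → ℝ, (∃ lam' : ℝ, ∀ i, mmProd p A z i = lam' + z i) →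
      ∀ i j, z i - z j ≥ D i j)
    (hact : ∀ i : Fin n, ∃ j : Fin n,
      A i j = maxmin p (fun l => A i l + D l j) ∧
      maxmin p (fun l => A i l + D l j) = maxmin p (fun l => A i l - D j l))
    (x y : Fin n → ℝ) (lam α β : ℝ)
    (hx : ∀ i, mmProd p A x i = lam + x i)
    (hy : ∀ i, mmProd p A y i = lam + y i) :
    (∀ i, mmProd p A (fun j => max (α + x j) (β + y j)) i =
        lam + max (α + x i) (β + y i)) ∧
    (∀ i, mmProd p A (fun j => min (α + x j) (β + y j)) i =
        lam + min (α + x i) (β + y i)) := by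
  have hx' : ∀ i, mmProd p A (fun j => α + x j) i = lam + (α + x i) := fun i => by
    rw [mmProd_const_add hp1 hpn, hx]
    ring
  have hy' : ∀ i, mmProd p A (fun j => β + y j) i = lam + (β + y i) := fun i => by
    rw [mmProd_const_add hp1 hpn, hy]
    ring
  have hxD : (fun j => α + x j) ∈ zone D := hzone _ ⟨lam, hx'⟩
  have hyD : (fun j => β + y j) ∈ zone D := hzone _ ⟨lam, hy'⟩
  refine ⟨fun i => ?_, fun i => ?_⟩ <;> obtain ⟨j, hij⟩ := hact i
  · rw [mmProd_max_of_mem_zone hp1 hpn hxD hyD hij, hx', hy', max_add_add_left]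
  · rw [mmProd_min_of_mem_zone hp1 hpn hxD hyD hij, hx', hy', min_add_add_left]

/-- Suppose every maxmin-`p` eigenvector of `A` lies in the zone of `D`, and every row `i`
has an entry `j` with `A i j = L i j = U i j` (where `L i j := ⊕_p(l ↦ A i l + D l j)` and
`U i j := ⊕_p(l ↦ A i l − D j l)`). Then max-plus and min-plus linear combinations of
eigenvectors associated with `λ` are again eigenvectors associated with `λ`. -/
theorem eigen_combinations (n p : ℕ) (hn : 1 ≤ n) (hp1 : 1 ≤ p) (hpn : p ≤ n)
    (A D : Fin n → Fin n → ℝ)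
    (hzone : ∀ z : Fin n → ℝ, (∃ lam' : ℝ, ∀ i, mmProd p A z i = lam' + z i) →
      ∀ i j, z i - z j ≥ D i j)
    (hact : ∀ i : Fin n, ∃ j : Fin n,
      A i j = maxmin p (fun l => A i l + D l j) ∧
      maxmin p (fun l => A i l + D l j) = maxmin p (fun l => A i l - D j l))
    (x y : Fin n → ℝ) (lam α β : ℝ)
    (hx : ∀ i, mmProd p A x i = lam + x i)
    (hy : ∀ i, mmProd p A y i = lam + y i) :
    (∀ i, mmProd p A (fun j => max (α + x j) (β + y j)) i =
        lam + max (α + x i) (β + y i)) ∧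
    (∀ i, mmProd p A (fun j => min (α + x j) (β + y j)) i =
        lam + min (α + x i) (β + y i)) :=
  eigen_combinations_general n p hp1 hpn A D hzone hact x y lam α β hx hy
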